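/- Fix k ∈ {1,…,c}, V ∈ {−1,+1}^{n×c}, S ∈ {0,1}^{n×n}, and the columns of U other than column k, and view L as a function of the column u = U_{*k}. Let u₀ ∈ {−1,+1}^n be the current column, let b = g(u₀) + (nλ²/(4c²))·u₀ where g(u₀)_i = (λ/c)·Σ_{j=1}^n (S_{ij} − A_{ij}(u₀))·V_{jk}, and let u' ∈ {−1,+1}^n be any vector satisfying u'_i·b_i = |b_i| for all i (i.e., u' agrees with sign(b) wherever b_i ≠ 0, as in update rule (3)). Then L(u') ≥ L(u₀): the DLFH column update for U never decreases the objective. -/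

import Mathlib

open scoped BigOperators

/-- The logistic (sigmoid) function. -/
noncomputable def logistic (t : ℝ) : ℝ := 1 / (1 + Real.exp (-t))

/-!
Row `i` of the objective depends on the new column only through `u_i`. Since
`(log (1 + exp θ))'' = σ(θ)(1 - σ(θ)) ≤ 1/4`, the function `θ²/8 - log (1 + exp θ)` is convex, so
each summand of a row lies above its tangent parabola; summed over `j` this is the minorization
with curvature `M = nλ²/(4c²)`. On `{−1,+1}` the surrogate gain `g d - (M/2) d²` with
`d = u'_i - u₀_i` equals `u'_i b_i - u₀_i b_i = |b_i| - u₀_i b_i ≥ 0`.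
-/

open Real Finset Set

lemma logistic_eq_sigmoid : logistic = sigmoid :=
  funext fun t => by rw [logistic, sigmoid_def, one_div]

lemma hasDerivAt_log_one_add_exp (t : ℝ) :
    HasDerivAt (fun z => log (1 + exp z)) (sigmoid t) t := by
  convert ((hasDerivAt_exp t).const_add 1).log (by positivity) using 1
  rw [sigmoid_def, exp_neg]
  field_simp
  ring

lemma sigmoid_mul_one_sub_le (t : ℝ) : sigmoid t * (1 - sigmoid t) ≤ 1 / 4 := by
  nlinarith [sq_nonneg (sigmoid t - 1 / 2)]

lemma hasDerivAt_sq_div_eight_sub_log_one_add_exp (z : ℝ) :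
    HasDerivAt (fun z => z ^ 2 / 8 - log (1 + exp z)) (z / 4 - sigmoid z) z := by
  refine (((hasDerivAt_pow 2 z).div_const 8).sub (hasDerivAt_log_one_add_exp z)).congr_deriv ?_
  ring

lemma convexOn_sq_div_eight_sub_log_one_add_exp :
    ConvexOn ℝ univ fun z => z ^ 2 / 8 - log (1 + exp z) := by
  have hd := hasDerivAt_sq_div_eight_sub_log_one_add_exp
  have hd2 (z : ℝ) :
      HasDerivAt (fun z => z / 4 - sigmoid z) (1 / 4 - sigmoid z * (1 - sigmoid z)) z :=
    ((hasDerivAt_id z).div_const 4).sub (hasDerivAt_sigmoid z)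
  refine convexOn_of_hasDerivWithinAt2_nonneg convex_univ (continuous_iff_continuousAt.2
    fun z => (hd z).continuousAt).continuousOn (fun z _ => (hd z).hasDerivWithinAt)
    (fun z _ => (hd2 z).hasDerivWithinAt) fun z _ => ?_
  linarith [sigmoid_mul_one_sub_le z]

lemma ConvexOn.add_mul_sub_le_of_hasDerivAt {S : Set ℝ} {f : ℝ → ℝ} {f' x y : ℝ}
    (hf : ConvexOn ℝ S f) (hx : x ∈ S) (hy : y ∈ S) (hd : HasDerivAt f f' x) :
    f x + f' * (y - x) ≤ f y := by
  rcases lt_trichotomy x y with hxy | rfl | hxy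
  · have := hf.le_slope_of_hasDerivAt hx hy hxy hd
    rw [slope_def_field, le_div_iff₀ (sub_pos.2 hxy)] at this
    linarith
  · simp
  · have := hf.slope_le_of_hasDerivAt hy hx hxy hd
    rw [slope_def_field, div_le_iff₀ (sub_pos.2 hxy)] at this
    linarith

lemma log_one_add_exp_le (x y : ℝ) :
    log (1 + exp y) ≤ log (1 + exp x) + sigmoid x * (y - x) + (y - x) ^ 2 / 8 := by
  have := convexOn_sq_div_eight_sub_log_one_add_exp.add_mul_sub_le_of_hasDerivAt
    (mem_univ x) (mem_univ y) (hasDerivAt_sq_div_eight_sub_log_one_add_exp x)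
  linarith

lemma sum_mul_sub_log_one_add_exp_ge {ι : Type*} [Fintype ι] (s v θ θ' : ι → ℝ) {δ : ℝ}
    (hv : ∀ j, v j ^ 2 ≤ 1) (hθ : ∀ j, θ' j - θ j = δ * v j) :
    ∑ j, (s j * θ j - log (1 + exp (θ j))) + δ * ∑ j, (s j - sigmoid (θ j)) * v j
        - Fintype.card ι * δ ^ 2 / 8 ≤
      ∑ j, (s j * θ' j - log (1 + exp (θ' j))) := by
  have hterm (j : ι) : s j * θ j - log (1 + exp (θ j)) + δ * ((s j - sigmoid (θ j)) * v j)
      - δ ^ 2 / 8 ≤ s j * θ' j - log (1 + exp (θ' j)) := by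
    have hθj : θ' j = θ j + δ * v j := by linarith [hθ j]
    have hsq : (δ * v j) ^ 2 ≤ δ ^ 2 := by
      rw [mul_pow]; nlinarith [hv j, sq_nonneg δ]
    have := log_one_add_exp_le (θ j) (θ' j)
    rw [hθj, add_sub_cancel_left] at this
    rw [hθj]
    linarith
  calc _ = ∑ j, (s j * θ j - log (1 + exp (θ j)) + δ * ((s j - sigmoid (θ j)) * v j)
          - δ ^ 2 / 8) := by
        simp only [sum_sub_distrib, sum_add_distrib, mul_sum, sum_const, card_univ, nsmul_eq_mul]
        ring
    _ ≤ _ := sum_le_sum fun j _ => hterm j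

lemma mul_sub_sub_half_mul_sq_nonneg_of_mul_eq_abs {t t' g M : ℝ} (ht : t = 1 ∨ t = -1)
    (ht' : t' = 1 ∨ t' = -1) (hmax : t' * (g + M * t) = |g + M * t|) :
    0 ≤ g * (t' - t) - M / 2 * (t' - t) ^ 2 := by
  have hle : t * (g + M * t) ≤ |g + M * t| := calc
    _ ≤ |t * (g + M * t)| := le_abs_self _
    _ = |g + M * t| := by
      rw [abs_mul, show |t| = 1 by rcases ht with rfl | rfl <;> norm_num, one_mul]
  have ht2 : t ^ 2 = 1 := by rcases ht with rfl | rfl <;> norm_num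
  have ht2' : t' ^ 2 = 1 := by rcases ht' with rfl | rfl <;> norm_num
  have : g * (t' - t) - M / 2 * (t' - t) ^ 2 = t' * (g + M * t) - t * (g + M * t) := by
    linear_combination (-M / 2) * ht2' + (M / 2) * ht2
  linarith

theorem dlfh_update_U_ascent_general (n c : ℕ)
    (lam : ℝ) (k : Fin c)
    (U V : Fin n → Fin c → ℝ)
    (hV : ∀ j k', V j k' = 1 ∨ V j k' = -1)
    (S : Fin n → Fin n → ℝ)
    (Θ : (Fin n → ℝ) → Fin n → Fin n → ℝ)
    (hΘ : ∀ u i j, Θ u i j =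
      (lam / c) * (u i * V j k + ∑ k' ∈ Finset.univ.erase k, U i k' * V j k'))
    (L : (Fin n → ℝ) → ℝ)
    (hL : ∀ u, L u = ∑ i : Fin n, ∑ j : Fin n,
      (S i j * Θ u i j - Real.log (1 + Real.exp (Θ u i j))))
    (u₀ : Fin n → ℝ) (hu₀ : ∀ i, u₀ i = 1 ∨ u₀ i = -1)
    (b : Fin n → ℝ)
    (hb : ∀ i, b i = (lam / c) * (∑ j : Fin n, (S i j - logistic (Θ u₀ i j)) * V j k)
      + (n * lam ^ 2 / (4 * c ^ 2)) * u₀ i)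
    (u' : Fin n → ℝ) (hu' : ∀ i, u' i = 1 ∨ u' i = -1)
    (hmax : ∀ i, u' i * b i = |b i|) :
    L u₀ ≤ L u' := by
  rw [hL u₀, hL u']
  refine sum_le_sum fun i _ => ?_
  set T := ∑ j, (S i j - sigmoid (Θ u₀ i j)) * V j k
  have hrow := sum_mul_sub_log_one_add_exp_ge (S i) (fun j => V j k) (Θ u₀ i) (Θ u' i)
    (δ := lam / c * (u' i - u₀ i)) (fun j => by rcases hV j k with h | h <;> simp [h])
    (fun j => by rw [hΘ, hΘ]; ring)
  have hgain := mul_sub_sub_half_mul_sq_nonneg_of_mul_eq_abs (hu₀ i) (hu' i)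
    (g := lam / c * T) (M := (n : ℝ) * lam ^ 2 / (4 * (c : ℝ) ^ 2))
    (by simpa only [hb i, logistic_eq_sigmoid] using hmax i)
  have hsurrogate : lam / c * (u' i - u₀ i) * T - n * (lam / c * (u' i - u₀ i)) ^ 2 / 8 =
      lam / c * T * (u' i - u₀ i) - n * lam ^ 2 / (4 * c ^ 2) / 2 * (u' i - u₀ i) ^ 2 := by
    ring
  rw [Fintype.card_fin] at hrow
  linarith

/-- The DLFH column update (3) for `U` never decreases the objective: if `u₀` is the
current column of `U`, `b = g(u₀) + (nλ²/(4c²))·u₀`, and `u' ∈ {−1,+1}^n` satisfies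
`u'_i·b_i = |b_i|` for all `i`, then `L(u') ≥ L(u₀)`. -/
theorem dlfh_update_U_ascent (n c : ℕ) (hn : 1 ≤ n) (hc : 1 ≤ c)
    (lam : ℝ) (hlam : 0 < lam) (k : Fin c)
    (U V : Fin n → Fin c → ℝ)
    (hU : ∀ i k', U i k' = 1 ∨ U i k' = -1)
    (hV : ∀ j k', V j k' = 1 ∨ V j k' = -1)
    (S : Fin n → Fin n → ℝ)
    (hS : ∀ i j, S i j = 0 ∨ S i j = 1)
    (Θ : (Fin n → ℝ) → Fin n → Fin n → ℝ)
    (hΘ : ∀ u i j, Θ u i j =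
      (lam / c) * (u i * V j k + ∑ k' ∈ Finset.univ.erase k, U i k' * V j k'))
    (L : (Fin n → ℝ) → ℝ)
    (hL : ∀ u, L u = ∑ i : Fin n, ∑ j : Fin n,
      (S i j * Θ u i j - Real.log (1 + Real.exp (Θ u i j))))
    (u₀ : Fin n → ℝ) (hu₀ : ∀ i, u₀ i = 1 ∨ u₀ i = -1)
    (b : Fin n → ℝ)
    (hb : ∀ i, b i = (lam / c) * (∑ j : Fin n, (S i j - logistic (Θ u₀ i j)) * V j k)
      + (n * lam ^ 2 / (4 * c ^ 2)) * u₀ i)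
    (u' : Fin n → ℝ) (hu' : ∀ i, u' i = 1 ∨ u' i = -1)
    (hmax : ∀ i, u' i * b i = |b i|) :
    L u₀ ≤ L u' :=
  dlfh_update_U_ascent_general n c lam k U V hV S Θ hΘ L hL u₀ hu₀ b hb u' hu' hmax
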